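/- arXiv:1601.01041 — 5 statements merged into one kernel-verified Lean document; each statement's English description precedes it below -/
import Mathlib

section
/- For two maximal forests F1, F2 of a graph G and a natural number l, if |E(F1) \ E(F2)| = l then |E(F2) \ E(F1)| = l. -/
/-! Maximal forests are exactly the acyclic subgraphs with the same connected components as `G`,
so they satisfy the basis exchange axiom of the graphic matroid: deleting an edge `uv` from `F₁`
splits one component into the parts of `u` and `v`, the `F₂`-path from `u` to `v` must cross
between them along an edge `ab ∉ F₁`, and adding `ab` reconnects them without closing a cycle.
For any family of sets with the exchange property, `|B₁ \ B₂| = |B₂ \ B₁|`. -/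

open Cardinal

variable {V : Type*}

/-- `F` is a maximal forest of `G`: an acyclic subgraph of `G` maximal among
acyclic subgraphs of `G` under inclusion. -/
def IsMaximalForest (G F : SimpleGraph V) : Prop :=
  F ≤ G ∧ F.IsAcyclic ∧ ∀ F' : SimpleGraph V, F' ≤ G → F'.IsAcyclic → F ≤ F' → F' = F

/-- The forest graph of `G`: vertices are the maximal forests of `G`,
two adjacent iff they differ by exactly one edge. -/
def forestGraph (G : SimpleGraph V) :
    SimpleGraph {F : SimpleGraph V // IsMaximalForest G F} where
  Adj F₁ F₂ := (F₁.1.edgeSet \ F₂.1.edgeSet).encard = 1 ∧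
               (F₂.1.edgeSet \ F₁.1.edgeSet).encard = 1
  symm := ⟨fun F₁ F₂ h => ⟨h.2, h.1⟩⟩
  loopless := ⟨fun F h => by simp at h⟩

/-- The set of cycles of `G`, each cycle identified with its edge set. -/
def cycleSet (G : SimpleGraph V) : Set (Set (Sym2 V)) :=
  {s | ∃ (v : V) (c : G.Walk v v), c.IsCycle ∧ s = {e | e ∈ c.edges}}

namespace SimpleGraph

variable {G : SimpleGraph V}

theorem Reachable.mem_of_forall_adj {S : Set V} (hS : ∀ ⦃a b⦄, G.Adj a b → a ∈ S → b ∈ S)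
    {x y : V} (h : G.Reachable x y) (hx : x ∈ S) : y ∈ S := by
  obtain ⟨p⟩ := h
  by_contra hy
  obtain ⟨d, -, hd, hd'⟩ := p.exists_boundary_dart S hx hy
  exact hd' (hS d.adj hd)

theorem Reachable.of_sup_edge {u v x y : V} (huv : G.Reachable u v)
    (h : (G ⊔ edge u v).Reachable x y) : G.Reachable x y := by
  refine h.mem_of_forall_adj (S := {y | G.Reachable x y}) ?_ Reachable.rfl
  rintro a b (hab | hab) (hxa : G.Reachable x a)
  · exact hxa.trans hab.reachable
  · rcases ((edge_adj u v a b).mp hab).1 with ⟨rfl, rfl⟩ | ⟨rfl, rfl⟩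
    exacts [hxa.trans huv, hxa.trans huv.symm]

theorem Reachable.or_of_sup_edge {u v x : V} (h : (G ⊔ edge u v).Reachable u x) :
    G.Reachable u x ∨ G.Reachable v x := by
  refine h.mem_of_forall_adj (S := {x | G.Reachable u x ∨ G.Reachable v x}) ?_
    (Or.inl Reachable.rfl)
  rintro a b (hab | hab) (ha : G.Reachable u a ∨ G.Reachable v a)
  · exact ha.imp (·.trans hab.reachable) (·.trans hab.reachable)
  · rcases ((edge_adj u v a b).mp hab).1 with ⟨-, rfl⟩ | ⟨-, rfl⟩
    exacts [Or.inr Reachable.rfl, Or.inl Reachable.rfl]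

end SimpleGraph

open SimpleGraph

theorem isMaximalForest_iff_maximal {G F : SimpleGraph V} :
    IsMaximalForest G F ↔ Maximal (fun H ↦ H ≤ G ∧ H.IsAcyclic) F :=
  ⟨fun ⟨hle, hac, hmax⟩ ↦ ⟨⟨hle, hac⟩, fun H ⟨hHG, hH⟩ hFH ↦ (hmax H hHG hH hFH).le⟩,
    fun ⟨⟨hle, hac⟩, hmax⟩ ↦ ⟨hle, hac, fun _ hHG hH hFH ↦ (hmax ⟨hHG, hH⟩ hFH).antisymm hFH⟩⟩

theorem isMaximalForest_iff {G F : SimpleGraph V} :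
    IsMaximalForest G F ↔ F ≤ G ∧ F.IsAcyclic ∧ F.Reachable = G.Reachable := by
  rw [isMaximalForest_iff_maximal]
  exact ⟨fun h ↦ ⟨h.prop.1, h.prop.2, (maximal_isAcyclic_iff_reachable_eq h.prop.1 h.prop.2).mp h⟩,
    fun ⟨hle, hac, hreach⟩ ↦ (maximal_isAcyclic_iff_reachable_eq hle hac).mpr hreach⟩

theorem IsMaximalForest.exchange {G F₁ F₂ : SimpleGraph V}
    (h₁ : IsMaximalForest G F₁) (h₂ : IsMaximalForest G F₂) {e : Sym2 V}
    (he : e ∈ F₁.edgeSet \ F₂.edgeSet) :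
    ∃ f ∈ F₂.edgeSet \ F₁.edgeSet, ∃ F : SimpleGraph V,
      IsMaximalForest G F ∧ F.edgeSet = insert f (F₁.edgeSet \ {e}) := by
  obtain ⟨hle₁, hac₁, hreach₁⟩ := isMaximalForest_iff.mp h₁
  obtain ⟨hle₂, -, hreach₂⟩ := isMaximalForest_iff.mp h₂
  obtain ⟨u, v⟩ := e
  obtain ⟨huv : F₁.Adj u v, huv₂ : ¬F₂.Adj u v⟩ := he
  set D := F₁.deleteEdges {s(u, v)}
  have hDF₁ : D ≤ F₁ := deleteEdges_le _
  have hF₁D : F₁ ≤ D ⊔ edge u v := sup_comm D _ ▸ le_sup_sdiff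
  have hDuv : ¬D.Reachable u v := isAcyclic_iff_forall_adj_isBridge.mp hac₁ huv
  obtain ⟨p⟩ : F₂.Reachable u v := hreach₂ ▸ hreach₁ ▸ huv.reachable
  obtain ⟨⟨⟨a, b⟩, hab⟩, -, hua : D.Reachable u a, hub : ¬D.Reachable u b⟩ :=
    p.exists_boundary_dart {x | D.Reachable u x} Reachable.rfl hDuv
  have hDab : ¬D.Reachable a b := fun h ↦ hub (hua.trans h)
  have hvb : D.Reachable v b := by
    have hF₁ub : F₁.Reachable u b := (hua.mono hDF₁).trans (hreach₁ ▸ (hle₂ hab).reachable)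
    exact ((hF₁ub.mono hF₁D).or_of_sup_edge).resolve_left hub
  set F := D ⊔ edge a b
  have hFab : F.Adj a b := Or.inr ((edge_adj ..).mpr ⟨Or.inl ⟨rfl, rfl⟩, hab.ne⟩)
  have hFuv : F.Reachable u v :=
    ((hua.mono le_sup_left).trans hFab.reachable).trans (hvb.symm.mono le_sup_left)
  have hFG : F ≤ G := sup_le (hDF₁.trans hle₁) ((G.edge_le_iff).mpr (.inr (hle₂ hab)))
  refine ⟨s(a, b), ⟨hab, fun hab₁ ↦ hDab ?_⟩, F, isMaximalForest_iff.mpr ⟨hFG, ?_, ?_⟩, ?_⟩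
  · refine (deleteEdges_adj.mpr ⟨hab₁, ?_⟩).reachable
    rintro (h : s(a, b) = s(u, v))
    exact huv₂ (show s(u, v) ∈ F₂.edgeSet from h ▸ hab)
  · exact (hac₁.anti hDF₁).sup_edge_of_not_reachable hDab
  · ext x y
    refine ⟨(·.mono hFG), fun h ↦ ?_⟩
    exact hFuv.of_sup_edge ((hreach₁ ▸ h).mono (hF₁D.trans (sup_le_sup_right le_sup_left _)))
  · rw [edgeSet_sup, edgeSet_deleteEdges, edgeSet_edge_of_ne hab.ne, Set.union_singleton]

theorem exchangeProperty_isMaximalForest_edgeSet (G : SimpleGraph V) :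
    Matroid.ExchangeProperty fun B ↦ ∃ F : SimpleGraph V, IsMaximalForest G F ∧ F.edgeSet = B := by
  rintro _ _ ⟨F₁, h₁, rfl⟩ ⟨F₂, h₂, rfl⟩ e he
  exact h₁.exchange h₂ he

/-- For maximal forests `F₁, F₂` of `G`, if `|E(F₁) \ E(F₂)| = l` then `|E(F₂) \ E(F₁)| = l`. -/
theorem maximalForest_diff_card_symm (G F₁ F₂ : SimpleGraph V)
    (h₁ : IsMaximalForest G F₁) (h₂ : IsMaximalForest G F₂) (l : ℕ)
    (h : (F₁.edgeSet \ F₂.edgeSet).encard = l) :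
    (F₂.edgeSet \ F₁.edgeSet).encard = l := by
  rw [(exchangeProperty_isMaximalForest_edgeSet G).encard_sdiff_eq ⟨F₂, h₂, rfl⟩ ⟨F₁, h₁, rfl⟩, h]
end

section
/- If G is a complete graph of infinite order α, then the number of spanning trees of G equals 2^α. -/
open Cardinal

variable {V : Type*}

/-!
A graph on `W` is a set of pairs of vertices and `#W * #W = #W`, so there are at most `2 ^ #W`
graphs at all. Conversely, `W ≃ Option (W ⊕ W)` provides a root and two copies of `W`. For
`S ⊆ W`, hang each vertex `inl b` from the root, and `inr b` from `inl b` if `b ∈ S` and from the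
root otherwise: this is a tree, and `S` can be read off it, giving `2 ^ #W` distinct trees.
-/

universe u

lemma Cardinal.mk_simpleGraph_le (V : Type*) : #(SimpleGraph V) ≤ 2 ^ (#V * #V) := by
  have hinj : Function.Injective fun G : SimpleGraph V => {x : V × V | G.Adj x.1 x.2} :=
    fun G₁ G₂ h => SimpleGraph.ext <| funext₂ fun x y => propext (Set.ext_iff.mp h (x, y))
  simpa [mk_prod] using mk_le_of_injective hinj

namespace SimpleGraph

def parentGraph (p : V → V) : SimpleGraph V :=
  fromRel fun x y => p x = y

lemma parentGraph_adj {p : V → V} {x y : V} :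
    (parentGraph p).Adj x y ↔ x ≠ y ∧ (p x = y ∨ p y = x) :=
  fromRel_adj _ x y

section Rank

variable {β : Type*} {p : V → V} {rank : V → β}

/-- In a cycle, the vertex of largest rank has two distinct neighbours on the cycle; both must be
its parent, since a neighbour whose parent it is would have larger rank. -/
lemma isAcyclic_parentGraph [LinearOrder β] (hrank : ∀ x, p x ≠ x → rank (p x) < rank x) :
    (parentGraph p).IsAcyclic := by
  classical
  intro v c hc
  obtain ⟨u, hu, hmax⟩ := c.support.toFinset.exists_max_image rank ⟨v, by simp⟩
  rw [List.mem_toFinset] at hu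
  have hc' : (c.rotate u hu).IsCycle := hc.rotate hu
  have eq_parent : ∀ z ∈ (c.rotate u hu).support, (parentGraph p).Adj u z → p u = z := by
    intro z hz hadj
    obtain ⟨hne, hpu | hpz⟩ := parentGraph_adj.mp hadj
    · exact hpu
    · have hlt := hrank z (hpz ▸ hne)
      rw [hpz] at hlt
      exact absurd (hmax z (by simpa using hz)) (not_le.mpr hlt)
  have hnil := hc'.not_nil
  exact hc'.snd_ne_penultimate <|
    (eq_parent _ (Walk.getVert_mem_support _ _) (Walk.adj_snd hnil)).symm.trans
      (eq_parent _ (Walk.getVert_mem_support _ _) (Walk.adj_penultimate hnil).symm)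

lemma reachable_parentGraph_root [Preorder β] [WellFoundedLT β] {r : V}
    (hrank : ∀ x, p x ≠ x → rank (p x) < rank x) (hroot : ∀ x, p x = x → x = r) (x : V) :
    (parentGraph p).Reachable x r := by
  induction x using (InvImage.wf rank wellFounded_lt).induction with
  | _ x ih =>
    by_cases hx : p x = x
    · rw [hroot x hx]
    · exact (parentGraph_adj.mpr ⟨Ne.symm hx, .inl rfl⟩).reachable.trans
        (ih (p x) (hrank x hx))

lemma isTree_parentGraph [LinearOrder β] [WellFoundedLT β] {r : V}
    (hrank : ∀ x, p x ≠ x → rank (p x) < rank x) (hroot : ∀ x, p x = x → x = r) :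
    (parentGraph p).IsTree :=
  ⟨connected_iff_exists_forall_reachable _ |>.mpr
      ⟨r, fun x => (reachable_parentGraph_root hrank hroot x).symm⟩,
    isAcyclic_parentGraph hrank⟩

end Rank

open Classical in
noncomputable def pairParent (S : Set V) : Option (V ⊕ V) → Option (V ⊕ V)
  | some (.inr b) => if b ∈ S then some (.inl b) else none
  | _ => none

def pairDepth : Option (V ⊕ V) → ℕ
  | none => 0
  | some (.inl _) => 1
  | some (.inr _) => 2

lemma isTree_parentGraph_pairParent (S : Set V) : (parentGraph (pairParent S)).IsTree := by
  refine isTree_parentGraph (rank := pairDepth) (r := none) ?_ ?_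
  · rintro (_ | a | b) h
    · exact absurd rfl h
    · simp [pairParent, pairDepth]
    · by_cases hb : b ∈ S <;> simp [pairParent, pairDepth, hb]
  · rintro (_ | a | b) h
    · rfl
    · simp [pairParent] at h
    · by_cases hb : b ∈ S <;> simp [pairParent, hb] at h

lemma parentGraph_pairParent_adj_iff {S : Set V} {b : V} :
    (parentGraph (pairParent S)).Adj (some (.inr b)) (some (.inl b)) ↔ b ∈ S := by
  by_cases hb : b ∈ S <;> simp [parentGraph_adj, pairParent, hb]

lemma two_power_le_mk_isTree_option_sum (V : Type*) :
    2 ^ #V ≤ #{T : SimpleGraph (Option (V ⊕ V)) // T.IsTree} := by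
  rw [← mk_set]
  refine mk_le_of_injective (f := fun S => ⟨_, isTree_parentGraph_pairParent S⟩) ?_
  intro S₁ S₂ h
  ext b
  rw [← parentGraph_pairParent_adj_iff, ← parentGraph_pairParent_adj_iff, Subtype.mk.inj h]

lemma mk_isTree_congr {V W : Type u} (e : V ≃ W) :
    #{T : SimpleGraph V // T.IsTree} = #{T : SimpleGraph W // T.IsTree} :=
  mk_congr <| e.simpleGraph.subtypeEquiv fun G => (Iso.comap e.symm G).symm.isTree_iff

end SimpleGraph

/-- The complete graph of infinite order `α` has `2 ^ α` spanning trees. -/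
theorem card_spanningTrees_completeGraph (α : Cardinal.{u}) (hα : ℵ₀ ≤ α)
    (W : Type u) (hW : #W = α) :
    #{T : SimpleGraph W // T.IsTree} = 2 ^ α := by
  subst hW
  refine le_antisymm ?_ ?_
  · calc #{T : SimpleGraph W // T.IsTree}
        ≤ #(SimpleGraph W) := mk_subtype_le _
      _ ≤ 2 ^ (#W * #W) := mk_simpleGraph_le W
      _ = 2 ^ #W := by rw [mul_eq_self hα]
  · obtain ⟨e⟩ : Nonempty (W ≃ Option (W ⊕ W)) := by
      rw [← Cardinal.eq, mk_option, mk_sum, lift_id, add_eq_self hα, add_one_eq hα]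
    rw [SimpleGraph.mk_isTree_congr e]
    exact SimpleGraph.two_power_le_mk_isTree_option_sum W
end

section
/- If G is the complete graph on a countably infinite vertex set, then the forest graph F(G) is disconnected. -/
open Cardinal

variable {V : Type*}

/-
Two star spanning trees with distinct centres `u ≠ v` differ in infinitely many edges
(all `s(u, x)` with `x ∉ {u, v}`), whereas every step in the forest graph exchanges a single
edge, so maximal forests in the same component differ in only finitely many edges.
-/

namespace SimpleGraph

lemma isMaximalForest_iff_maximal {G F : SimpleGraph V} :
    IsMaximalForest G F ↔ Maximal (fun H ↦ H ≤ G ∧ H.IsAcyclic) F := by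
  refine ⟨fun ⟨hle, hF, hmax⟩ ↦ ⟨⟨hle, hF⟩, fun H hH hFH ↦ (hmax H hH.1 hH.2 hFH).le⟩,
    fun h ↦ ⟨h.prop.1, h.prop.2, fun H hHG hH hFH ↦ ?_⟩⟩
  exact (h.le_of_ge ⟨hHG, hH⟩ hFH).antisymm hFH

lemma IsTree.isMaximalForest {G F : SimpleGraph V} (hF : F.IsTree) (hle : F ≤ G) :
    IsMaximalForest G F :=
  isMaximalForest_iff_maximal.mpr <|
    ((hF.connected.mono hle).maximal_le_isAcyclic_iff_isTree hle).mpr hF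

lemma forestGraph.Reachable.edgeSet_diff_finite {G : SimpleGraph V}
    {F₁ F₂ : {F : SimpleGraph V // IsMaximalForest G F}} (h : (forestGraph G).Reachable F₁ F₂) :
    (F₁.1.edgeSet \ F₂.1.edgeSet).Finite := by
  obtain ⟨w⟩ := h
  induction w with
  | nil => simp
  | @cons F₁ F₂ F₃ hadj _ ih =>
    have hstep : (F₁.1.edgeSet \ F₂.1.edgeSet).Finite :=
      Set.finite_of_encard_eq_coe (k := 1) hadj.1
    exact (hstep.union ih).subset (sdiff_triangle _ _ _)

lemma edgeSet_starGraph_diff_infinite [Infinite V] {u v : V} (huv : u ≠ v) :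
    ((starGraph u).edgeSet \ (starGraph v).edgeSet).Infinite := by
  refine Set.infinite_of_injOn_mapsTo (f := fun x ↦ s(u, x))
    (fun x _ y _ hxy ↦ Sym2.congr_right.mp hxy) (fun x hx ↦ ?_)
    (Set.toFinite {u, v}).infinite_compl
  simp only [Set.mem_compl_iff, Set.mem_insert_iff, Set.mem_singleton_iff, not_or] at hx
  simp [Ne.symm hx.1, huv, hx.2]

end SimpleGraph

/-- The forest graph of the complete graph on a countably infinite vertex set is
disconnected. -/
theorem forestGraph_complete_countable_disconnected (W : Type*) (hW : #W = ℵ₀) :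
    ¬ (forestGraph (⊤ : SimpleGraph W)).Connected := by
  have : Infinite W := Cardinal.infinite_iff.mpr hW.ge
  obtain ⟨u, v, huv⟩ := exists_pair_ne W
  let star (r : W) : {F : SimpleGraph W // IsMaximalForest ⊤ F} :=
    ⟨SimpleGraph.starGraph r, (SimpleGraph.isTree_starGraph r).isMaximalForest le_top⟩
  intro hconn
  exact SimpleGraph.edgeSet_starGraph_diff_infinite huv
    (SimpleGraph.forestGraph.Reachable.edgeSet_diff_finite (hconn.preconnected (star u) (star v)))
end

section
/- If a graph G has a cycle of finite length n with n ≥ 3, then the forest graph F(G) contains K_n as a subgraph. -/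
open Cardinal

variable {V : Type*}

/-!
Write the cycle as an edge `e₀ = s(u, b)` followed by a path from `b` to `u`, extend that path to a
spanning forest `F` of `G`, and let `H = F ⊔ edge u b`. For every edge `e` of the cycle, `H - e` is
again a spanning forest: `e` lies on a cycle of `H`, so it is not a bridge and its deletion keeps
the reachability relation; and a cycle of `H - e` would have to use `e₀`, so `e₀` would not be a
bridge of `H - e`, whence `e` would not be a bridge of the forest `H - e₀`. Two of these `n`
forests differ in exactly one edge each way, so they form an `n`-clique of the forest graph.
-/

namespace SimpleGraph

variable {G H : SimpleGraph V}

theorem isMaximalForest_iff {F : SimpleGraph V} :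
    IsMaximalForest G F ↔ F ≤ G ∧ F.IsAcyclic ∧ F.Reachable = G.Reachable := by
  have : IsMaximalForest G F ↔ Maximal (fun H ↦ H ≤ G ∧ H.IsAcyclic) F :=
    ⟨fun ⟨hle, hF, hmax⟩ ↦ ⟨⟨hle, hF⟩, fun F' hF' h ↦ (hmax F' hF'.1 hF'.2 h).le⟩,
      fun ⟨⟨hle, hF⟩, hmax⟩ ↦ ⟨hle, hF, fun F' hle' hF' h ↦ (hmax ⟨hle', hF'⟩ h).antisymm h⟩⟩
  rw [this]
  exact ⟨fun h ↦ ⟨h.prop.1, h.prop.2, reachable_eq_of_maximal_isAcyclic F h⟩,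
    fun ⟨hle, hF, h⟩ ↦ (maximal_isAcyclic_iff_reachable_eq hle hF).2 h⟩

theorem Walk.IsPath.isAcyclic_fromEdgeSet {u v : V} {p : G.Walk u v} (hp : p.IsPath) :
    (fromEdgeSet {e | e ∈ p.edges}).IsAcyclic := by
  induction p with
  | nil => simp
  | @cons u w v huw p ih =>
    rw [Walk.cons_isPath_iff] at hp
    have hsplit : fromEdgeSet {e | e ∈ (Walk.cons huw p).edges} =
        fromEdgeSet {e | e ∈ p.edges} ⊔ edge u w := by
      ext a b
      simp only [edges_cons, List.mem_cons, fromEdgeSet_adj, Set.mem_ofPred_eq, sup_adj, edge_adj]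
      grind
    rw [hsplit]
    -- `u` is not on `p`, so it is an isolated vertex of the edge graph of `p`
    refine (ih hp.1).sup_edge_of_not_reachable fun ⟨r⟩ ↦ ?_
    cases r with
    | nil => exact hp.2 p.start_mem_support
    | cons hadj _ => exact hp.2 (p.fst_mem_support_of_mem_edges (fromEdgeSet_adj _ |>.1 hadj).1)

theorem reachable_deleteEdges_eq_of_not_isBridge {e : Sym2 V} (he : ¬G.IsBridge e) :
    (G.deleteEdges {e}).Reachable = G.Reachable := by
  induction e with | h x y =>
  rw [isBridge_iff, not_not] at he
  refine le_antisymm (fun a b h ↦ h.mono (deleteEdges_le _)) fun a b h ↦ ?_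
  obtain ⟨p⟩ := h
  induction p with
  | nil => rfl
  | @cons a b _ hab _ ih =>
    refine Reachable.trans ?_ ih
    by_cases h : s(a, b) = s(x, y)
    · rcases Sym2.eq_iff.1 h with ⟨rfl, rfl⟩ | ⟨rfl, rfl⟩
      exacts [he, he.symm]
    · exact ((deleteEdges_adj ..).2 ⟨hab, h⟩).reachable

theorem Walk.IsCycle.isAcyclic_deleteEdges_of_isAcyclic_deleteEdges {u : V} {c : H.Walk u u}
    (hc : c.IsCycle) {e e' : Sym2 V} (he : e ∈ c.edges) (he' : e' ∈ c.edges)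
    (h : (H.deleteEdges {e'}).IsAcyclic) : (H.deleteEdges {e}).IsAcyclic := by
  obtain rfl | hne := eq_or_ne e e'
  · exact h
  intro w d hd
  have hd' : e' ∈ d.edges := by
    by_contra hd'
    have hsub : ∀ f ∈ d.edges, f ∈ (H.deleteEdges {e'}).edgeSet := fun f hf ↦ by
      have := d.edges_subset_edgeSet hf
      rw [edgeSet_deleteEdges] at this ⊢
      exact ⟨this.1, fun hf' ↦ hd' (hf' ▸ hf)⟩
    exact h _ (hd.transfer hsub)
  have hreach : ((H.deleteEdges {e'}).deleteEdges {e}).Reachable = H.Reachable := by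
    rw [deleteEdges_deleteEdges, Set.union_comm, ← deleteEdges_deleteEdges,
      reachable_deleteEdges_eq_of_not_isBridge (·.notMem_edges_of_isCycle hd hd'),
      reachable_deleteEdges_eq_of_not_isBridge (·.notMem_edges_of_isCycle hc he)]
  induction e with | h x y =>
  have hbridge := isAcyclic_iff_forall_isBridge.1 h (e := s(x, y))
    (by simpa [hne] using c.edges_subset_edgeSet he)
  exact hbridge (hreach ▸ (c.adj_of_mem_edges he).reachable)

theorem isMaximalForest_deleteEdges_of_isCycle (hHG : H ≤ G) (hH : H.Reachable = G.Reachable)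
    {u : V} {c : H.Walk u u} (hc : c.IsCycle) {e₀ e : Sym2 V} (he₀ : e₀ ∈ c.edges)
    (hacyc : (H.deleteEdges {e₀}).IsAcyclic) (he : e ∈ c.edges) :
    IsMaximalForest G (H.deleteEdges {e}) :=
  isMaximalForest_iff.2 ⟨(deleteEdges_le _).trans hHG,
    hc.isAcyclic_deleteEdges_of_isAcyclic_deleteEdges he he₀ hacyc,
    (reachable_deleteEdges_eq_of_not_isBridge (·.notMem_edges_of_isCycle hc he)).trans hH⟩

theorem Walk.IsCycle.exists_forall_isMaximalForest_deleteEdges {u : V} {c : G.Walk u u}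
    (hc : c.IsCycle) : ∃ H : SimpleGraph V,
      (∀ e ∈ c.edges, e ∈ H.edgeSet) ∧ ∀ e ∈ c.edges, IsMaximalForest G (H.deleteEdges {e}) := by
  cases c with
  | nil => exact absurd hc not_isCycle_nil
  | @cons _ b _ hub q =>
    rw [cons_isCycle_iff] at hc
    have hqG : fromEdgeSet {e | e ∈ q.edges} ≤ G := fun x y hxy ↦
      q.edges_subset_edgeSet ((fromEdgeSet_adj _).1 hxy).1
    obtain ⟨F, hqF, hFG, hF, hFreach⟩ :=
      exists_isAcyclic_reachable_eq_le_of_le_of_isAcyclic hqG hc.1.isAcyclic_fromEdgeSet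
    set H := F ⊔ edge u b
    have hcH : ∀ e ∈ (cons hub q).edges, e ∈ H.edgeSet := by
      intro e he
      simp only [edges_cons, List.mem_cons] at he
      simp only [H, edgeSet_sup]
      rcases he with rfl | he
      · exact Or.inr (by simp [hub.ne])
      · have hdiag := G.not_isDiag_of_mem_edgeSet (q.edges_subset_edgeSet he)
        exact Or.inl (edgeSet_mono hqF (by simpa using ⟨he, hdiag⟩))
    have hHG : H ≤ G := sup_le hFG ((edge_le_iff G).2 (.inr hub))
    have hH : H.Reachable = G.Reachable :=
      le_antisymm (fun x y h ↦ h.mono hHG) (hFreach ▸ fun x y h ↦ h.mono le_sup_left)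
    have hacyc : (H.deleteEdges {s(u, b)}).IsAcyclic := hF.anti fun x y hxy ↦ by
      simp only [H, deleteEdges_adj, sup_adj, edge_adj, Set.mem_singleton_iff] at hxy
      grind
    refine ⟨H, hcH, fun e he ↦ isMaximalForest_deleteEdges_of_isCycle hHG hH
      ((cons_isCycle_iff q hub).2 hc |>.transfer hcH) ?_ hacyc ?_⟩
    all_goals rw [edges_transfer]
    exacts [List.mem_cons_self, he]

theorem exists_isNClique_of_pairwise_adj {W : Type*} {G : SimpleGraph W} {n : ℕ}
    {f : Fin n → W} (hf : Pairwise fun i j ↦ G.Adj (f i) (f j)) : ∃ t, G.IsNClique n t := by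
  have hinj : Function.Injective f := fun i j hij ↦ by_contra fun hne ↦ (hf hne).ne hij
  exact ⟨_, Fintype.card_fin n ▸ isNClique_map_copy_top (⟨⟨f, fun h ↦ hf h⟩, hinj⟩ : Copy ⊤ G)⟩

theorem edgeSet_deleteEdges_diff_edgeSet_deleteEdges {e₁ e₂ : Sym2 V} (he₂ : e₂ ∈ H.edgeSet)
    (hne : e₁ ≠ e₂) : (H.deleteEdges {e₁}).edgeSet \ (H.deleteEdges {e₂}).edgeSet = {e₂} := by
  ext e
  simp only [edgeSet_deleteEdges, Set.mem_sdiff, Set.mem_singleton_iff]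
  grind

theorem forestGraph_adj_deleteEdges {e₁ e₂ : Sym2 V} (he₁ : e₁ ∈ H.edgeSet)
    (he₂ : e₂ ∈ H.edgeSet) (hne : e₁ ≠ e₂) (h₁ : IsMaximalForest G (H.deleteEdges {e₁}))
    (h₂ : IsMaximalForest G (H.deleteEdges {e₂})) :
    (forestGraph G).Adj ⟨_, h₁⟩ ⟨_, h₂⟩ := by
  simp only [forestGraph, edgeSet_deleteEdges_diff_edgeSet_deleteEdges he₂ hne,
    edgeSet_deleteEdges_diff_edgeSet_deleteEdges he₁ hne.symm, Set.encard_singleton, and_self]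

end SimpleGraph

theorem cycle_clique_forestGraph_general (G : SimpleGraph V) (n : ℕ)
    (v : V) (c : G.Walk v v) (hc : c.IsCycle) (hl : c.length = n) :
    ∃ t : Finset {F : SimpleGraph V // IsMaximalForest G F},
      (forestGraph G).IsNClique n t := by
  obtain ⟨H, hcH, hmax⟩ := hc.exists_forall_isMaximalForest_deleteEdges
  have hlen : c.edges.length = n := by rw [SimpleGraph.Walk.length_edges, hl]
  have hmem (i : Fin n) : c.edges[i.1] ∈ c.edges := List.getElem_mem _
  exact SimpleGraph.exists_isNClique_of_pairwise_adj (f := fun i ↦ ⟨_, hmax _ (hmem i)⟩)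
    fun i j hij ↦ SimpleGraph.forestGraph_adj_deleteEdges (hcH _ (hmem i)) (hcH _ (hmem j))
      (hc.edges_nodup.getElem_inj_iff.not.2 (Fin.val_ne_of_ne hij)) _ _

/-- If `G` has a cycle of finite length `n ≥ 3`, then the forest graph of `G`
contains `K_n`. -/
theorem cycle_clique_forestGraph (G : SimpleGraph V) (n : ℕ) (hn : 3 ≤ n)
    (v : V) (c : G.Walk v v) (hc : c.IsCycle) (hl : c.length = n) :
    ∃ t : Finset {F : SimpleGraph V // IsMaximalForest G F},
      (forestGraph G).IsNClique n t :=
  cycle_clique_forestGraph_general G n v c hc hl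
end

section
/- If a graph G has infinitely many cycles, with |𝔠(G)| = β an infinite cardinal, then the cyclomatic number of G equals β; that is, for any maximal forest F of G, |E(G) \ E(F)| = β. -/
open Cardinal

variable {V : Type*}

universe u

/-! Each edge `e` of `G` outside the maximal forest `F` closes a fundamental cycle whose only edge
outside `F` is `e`, so there are at least as many cycles as such edges. Conversely, a cycle is
determined by its finitely many edges outside `F`: the symmetric difference of two cycles with the
same such edges lies in the forest `F` and has every vertex of even degree, whereas a nonempty
finite forest has a leaf. So there are at most as many cycles as finite sets of edges outside `F`,
and when there are infinitely many such edges that is their number. -/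

open SimpleGraph

theorem Finset.card_symmDiff_add_two_mul_card_inter {α : Type*} [DecidableEq α] (s t : Finset α) :
    (symmDiff s t).card + 2 * (s ∩ t).card = s.card + t.card := by
  rw [symmDiff_def, Finset.sup_eq_union, Finset.card_union_of_disjoint disjoint_sdiff_sdiff]
  have := Finset.card_sdiff_add_card_inter s t
  have := Finset.card_sdiff_add_card_inter t s
  rw [Finset.inter_comm] at this
  omega

theorem Finset.even_card_symmDiff {α : Type*} [DecidableEq α] {s t : Finset α}
    (hs : Even s.card) (ht : Even t.card) : Even (symmDiff s t).card := by
  have := s.card_symmDiff_add_two_mul_card_inter t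
  obtain ⟨a, ha⟩ := hs
  obtain ⟨b, hb⟩ := ht
  exact ⟨a + b - (s ∩ t).card, by omega⟩

theorem Finset.filter_symmDiff {α : Type*} [DecidableEq α] (p : α → Prop) [DecidablePred p]
    (s t : Finset α) : (symmDiff s t).filter p = symmDiff (s.filter p) (t.filter p) := by
  ext
  simp only [Finset.mem_filter, Finset.mem_symmDiff]
  tauto

namespace SimpleGraph

theorem IsAcyclic.exists_incidenceSet_eq_singleton {H : SimpleGraph V} [Finite H.edgeSet]
    (hH : H.IsAcyclic) (hne : H.edgeSet.Nonempty) : ∃ u e, H.incidenceSet u = {e} := by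
  obtain ⟨⟨a, b⟩, hab⟩ := hne
  have : Nonempty V := ⟨a⟩
  obtain ⟨u, v, p, hp, hmax⟩ := Walk.exists_isPath_forall_isPath_length_le_length H
  have hnil : ¬p.Nil := by
    have : 1 ≤ p.length := hmax a b _ (Walk.IsPath.of_adj hab)
    rw [Walk.not_nil_iff_lt_length]
    omega
  refine ⟨u, s(u, p.snd), Set.eq_singleton_iff_unique_mem.mpr ⟨?_, ?_⟩⟩
  · exact (H.mem_incidenceSet u _).mpr (p.adj_snd hnil)
  · rintro e ⟨he, hue⟩
    obtain ⟨w, rfl⟩ := Sym2.mem_iff_exists.mp hue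
    have hadj : H.Adj u w := he
    -- a neighbour of `u` off the path would extend `p` to a longer path
    have hw : w ∈ p.support := by
      by_contra hw
      have := hmax w v _ (hp.cons (h := hadj.symm) hw)
      simp at this
    rw [hH.eq_snd_of_adj_start hp hadj hw]

variable [DecidableEq V]

/-- The finite edge sets in the cycle space over `𝔽₂`. -/
def IsEvenEdgeSet (A : Finset (Sym2 V)) : Prop :=
  ∀ x : V, Even (A.filter (x ∈ ·)).card

theorem IsEvenEdgeSet.symmDiff {A B : Finset (Sym2 V)} (hA : IsEvenEdgeSet A)
    (hB : IsEvenEdgeSet B) : IsEvenEdgeSet (symmDiff A B) := by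
  intro x
  rw [Finset.filter_symmDiff]
  exact Finset.even_card_symmDiff (hA x) (hB x)

theorem Walk.IsTrail.isEvenEdgeSet_toFinset_edges {G : SimpleGraph V} {v : V} {p : G.Walk v v}
    (hp : p.IsTrail) : IsEvenEdgeSet p.edges.toFinset := by
  intro x
  have := (hp.even_countP_edges_iff x).mpr fun h => (h rfl).elim
  rw [List.countP_eq_length_filter, ← List.toFinset_card_of_nodup (hp.edges_nodup.filter _),
    List.toFinset_filter] at this
  simpa only [decide_eq_true_eq] using this

theorem IsAcyclic.eq_empty_of_isEvenEdgeSet {F : SimpleGraph V} (hF : F.IsAcyclic)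
    {D : Finset (Sym2 V)} (hDF : (D : Set (Sym2 V)) ⊆ F.edgeSet) (hD : IsEvenEdgeSet D) :
    D = ∅ := by
  have hHD : (fromEdgeSet (D : Set (Sym2 V))).edgeSet = D := by
    rw [edgeSet_fromEdgeSet, sdiff_eq_left, Set.disjoint_left]
    exact fun e he => F.not_isDiag_of_mem_edgeSet (hDF he)
  have : Finite (fromEdgeSet (D : Set (Sym2 V))).edgeSet := by rw [hHD]; infer_instance
  have hH : (fromEdgeSet (D : Set (Sym2 V))).IsAcyclic :=
    hF.anti ((F.fromEdgeSet_le).mpr (Set.sdiff_subset.trans hDF))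
  by_contra hne
  obtain ⟨u, e, hue⟩ := hH.exists_incidenceSet_eq_singleton
    (by rw [hHD]; exact Finset.coe_nonempty.mpr (Finset.nonempty_iff_ne_empty.mpr hne))
  have hfilter : D.filter (u ∈ ·) = {e} := by
    rw [← Finset.coe_inj, Finset.coe_filter, Finset.coe_singleton, ← hue, incidenceSet, hHD]
    rfl
  have := hD u
  rw [hfilter, Finset.card_singleton] at this
  exact Nat.not_even_one this

theorem IsAcyclic.eq_of_isEvenEdgeSet_of_diff_eq {F : SimpleGraph V} (hF : F.IsAcyclic)
    {A B : Finset (Sym2 V)} (hA : IsEvenEdgeSet A) (hB : IsEvenEdgeSet B)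
    (h : (A : Set (Sym2 V)) \ F.edgeSet = ↑B \ F.edgeSet) : A = B := by
  refine symmDiff_eq_bot.mp (hF.eq_empty_of_isEvenEdgeSet ?_ (hA.symmDiff hB))
  intro e he
  by_contra heF
  have := congrArg (e ∈ ·) h
  simp only [Finset.coe_symmDiff, Set.mem_symmDiff, Finset.mem_coe] at he
  simp only [Set.mem_sdiff, Finset.mem_coe, heF, not_false_eq_true, and_true, eq_iff_iff] at this
  tauto

end SimpleGraph

theorem SimpleGraph.IsAcyclic.injOn_diff_edgeSet_cycleSet {G F : SimpleGraph V}
    (hF : F.IsAcyclic) : Set.InjOn (· \ F.edgeSet) (cycleSet G) := by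
  classical
  rintro _ ⟨u, c, hc, rfl⟩ _ ⟨v, d, hd, rfl⟩ h
  simp only [← List.coe_toFinset] at h ⊢
  rw [hF.eq_of_isEvenEdgeSet_of_diff_eq hc.isTrail.isEvenEdgeSet_toFinset_edges
    hd.isTrail.isEvenEdgeSet_toFinset_edges h]

theorem subset_edgeSet_of_mem_cycleSet {G : SimpleGraph V} {s : Set (Sym2 V)}
    (hs : s ∈ cycleSet G) : s ⊆ G.edgeSet := by
  obtain ⟨v, c, -, rfl⟩ := hs
  exact fun _ he => c.edges_subset_edgeSet he

theorem finite_of_mem_cycleSet {G : SimpleGraph V} {s : Set (Sym2 V)} (hs : s ∈ cycleSet G) :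
    s.Finite := by
  obtain ⟨v, c, -, rfl⟩ := hs
  exact c.edges.finite_toSet

theorem IsMaximalForest.reachable {G F : SimpleGraph V} (hF : IsMaximalForest G F) {u v : V}
    (h : G.Adj u v) : F.Reachable u v := by
  by_contra hr
  have hle : F ⊔ edge u v ≤ G := sup_le hF.1 ((edge_le_iff G).mpr (Or.inr h))
  have heq := hF.2.2 _ hle (hF.2.1.sup_edge_of_not_reachable hr) le_sup_left
  have hadj : (F ⊔ edge u v).Adj u v := Or.inr ((edge_adj ..).mpr ⟨Or.inl ⟨rfl, rfl⟩, h.ne⟩)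
  exact hr (heq ▸ hadj).reachable

/-- The fundamental cycle of an edge outside a maximal forest. -/
theorem IsMaximalForest.exists_mem_cycleSet_diff_eq {G F : SimpleGraph V}
    (hF : IsMaximalForest G F) {e : Sym2 V} (he : e ∈ G.edgeSet \ F.edgeSet) :
    ∃ s ∈ cycleSet G, s \ F.edgeSet = {e} := by
  induction e using Sym2.inductionOn with | hf u v => ?_
  obtain ⟨huv, hnF⟩ : G.Adj u v ∧ s(u, v) ∉ F.edgeSet := he
  obtain ⟨p, hp⟩ := (hF.reachable huv).symm.exists_isPath
  refine ⟨_, ⟨u, .cons huv (p.mapLe hF.1), ?_, rfl⟩, ?_⟩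
  · rw [Walk.cons_isCycle_iff, Walk.edges_mapLe_eq_edges, Walk.isPath_mapLe]
    exact ⟨hp, fun h => hnF (p.edges_subset_edgeSet h)⟩
  · ext e
    simp only [Walk.edges_cons, Walk.edges_mapLe_eq_edges, Set.mem_sdiff, Set.mem_ofPred_eq,
      List.mem_cons, Set.mem_singleton_iff]
    constructor
    · rintro ⟨rfl | he, heF⟩
      · rfl
      · exact (heF (p.edges_subset_edgeSet he)).elim
    · rintro rfl
      exact ⟨Or.inl rfl, hnF⟩

theorem IsMaximalForest.mk_diff_edgeSet_le_mk_cycleSet {G F : SimpleGraph V}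
    (hF : IsMaximalForest G F) : #(G.edgeSet \ F.edgeSet : Set (Sym2 V)) ≤ #(cycleSet G) := by
  choose f hf using fun e : ↥(G.edgeSet \ F.edgeSet) => hF.exists_mem_cycleSet_diff_eq e.2
  refine mk_le_of_injective (f := fun e => ⟨f e, (hf e).1⟩) fun e e' h => ?_
  have := (hf e).2
  rw [show f e = f e' from congrArg Subtype.val h, (hf e').2] at this
  exact Subtype.ext (Set.singleton_injective this).symm

theorem Cardinal.mk_le_mk_finset_of_injOn_inter {α : Type*} {X : Set (Set α)} {S : Set α}
    (hfin : ∀ t ∈ X, t.Finite) (hinj : Set.InjOn (· ∩ S) X) : #X ≤ #(Finset S) := by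
  refine mk_le_of_injective (f := fun t => ((hfin t t.2).preimage
    Subtype.val_injective.injOn).toFinset) fun s t h => ?_
  rw [Set.Finite.toFinset_inj, Subtype.preimage_coe_eq_preimage_coe_iff] at h
  exact Subtype.ext (hinj s.2 t.2 (by simpa only [Set.inter_comm S] using h))

/-- If `G` has infinitely many cycles, `β` of them, then the cyclomatic number of `G`
is `β`: for any maximal forest `F`, the number of edges of `G` outside `F` is `β`. -/
theorem cyclomatic_number {W : Type u} (G : SimpleGraph W) (β : Cardinal.{u}) (hβ : ℵ₀ ≤ β)
    (hc : #(cycleSet G) = β) (F : SimpleGraph W) (hF : IsMaximalForest G F) :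
    #(G.edgeSet \ F.edgeSet : Set (Sym2 W)) = β := by
  set S := G.edgeSet \ F.edgeSet
  have hinj : Set.InjOn (· ∩ S) (cycleSet G) :=
    hF.2.1.injOn_diff_edgeSet_cycleSet.congr fun s hs => by
      rw [← Set.inter_sdiff_assoc, Set.inter_eq_left.mpr (subset_edgeSet_of_mem_cycleSet hs)]
  have hcycles : β ≤ #(Finset S) :=
    hc ▸ Cardinal.mk_le_mk_finset_of_injOn_inter (fun _ => finite_of_mem_cycleSet) hinj
  have : Infinite S := not_finite_iff_infinite.mp fun _ =>
    (hβ.trans hcycles).not_gt (lt_aleph0_of_finite _)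
  rw [mk_finset_of_infinite] at hcycles
  exact le_antisymm (hc ▸ hF.mk_diff_edgeSet_le_mk_cycleSet) hcycles
end
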